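/- Let (α, β) be feasible for the dual LP of the LAP. Then (α, β) lies in the relative interior of the set of optimal solutions of the dual LP if and only if for all v ∈ V and ℓ ∈ L_v: α_v + β_ℓ = θ_v(ℓ) if and only if the pair (v, ℓ) is minimally assignable. -/

import Mathlib

open Finset

section LAPDefs

variable {V L : Type*} [Fintype V] [Fintype L] [DecidableEq V] [DecidableEq L]

/-- Feasibility for the primal LP of the LAP: `μ` is supported on allowed pairs,
nonnegative, each vertex's row sums to one and each label's column sums to one. -/
def PrimalFeasible (Lab : V → Finset L) (μ : V → L → ℝ) : Prop :=
  (∀ v ℓ, ℓ ∈ Lab v → 0 ≤ μ v ℓ) ∧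
  (∀ v ℓ, ℓ ∉ Lab v → μ v ℓ = 0) ∧
  (∀ v, ∑ ℓ ∈ Lab v, μ v ℓ = 1) ∧
  (∀ ℓ : L, ∑ v ∈ univ.filter (fun v => ℓ ∈ Lab v), μ v ℓ = 1)

/-- Objective of the primal LP of the LAP. -/
def primalObj (θ : V → L → ℝ) (Lab : V → Finset L) (μ : V → L → ℝ) : ℝ :=
  ∑ v, ∑ ℓ ∈ Lab v, θ v ℓ * μ v ℓ

/-- The set of optimal solutions of the primal LP of the LAP. -/
def PrimalOpt (θ : V → L → ℝ) (Lab : V → Finset L) : Set (V → L → ℝ) :=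
  {μ | PrimalFeasible Lab μ ∧
    ∀ ν, PrimalFeasible Lab ν → primalObj θ Lab μ ≤ primalObj θ Lab ν}

/-- Feasibility for the dual LP of the LAP: `α v + β ℓ ≤ θ v ℓ` on allowed pairs. -/
def DualFeasible (θ : V → L → ℝ) (Lab : V → Finset L) (p : (V → ℝ) × (L → ℝ)) : Prop :=
  ∀ v ℓ, ℓ ∈ Lab v → p.1 v + p.2 ℓ ≤ θ v ℓ

/-- Objective of the dual LP of the LAP. -/
def dualObj (p : (V → ℝ) × (L → ℝ)) : ℝ := ∑ v, p.1 v + ∑ ℓ, p.2 ℓ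

/-- The set of optimal solutions of the dual LP of the LAP. -/
def DualOpt (θ : V → L → ℝ) (Lab : V → Finset L) : Set ((V → ℝ) × (L → ℝ)) :=
  {p | DualFeasible θ Lab p ∧ ∀ q, DualFeasible θ Lab q → dualObj q ≤ dualObj p}

/-- A feasible assignment for the LAP: a bijection assigning allowed labels. -/
def FeasibleAssignment (Lab : V → Finset L) (x : V ≃ L) : Prop := ∀ v, x v ∈ Lab v

/-- Cost of an assignment. -/
def assignCost (θ : V → L → ℝ) (x : V ≃ L) : ℝ := ∑ v, θ v (x v)

/-- An optimal assignment for the LAP: feasible and cost-minimizing. -/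
def OptimalAssignment (θ : V → L → ℝ) (Lab : V → Finset L) (x : V ≃ L) : Prop :=
  FeasibleAssignment Lab x ∧
    ∀ y : V ≃ L, FeasibleAssignment Lab y → assignCost θ x ≤ assignCost θ y

/-- The pair `(v, ℓ)` is minimally assignable if some optimal assignment maps `v` to `ℓ`. -/
def MinimallyAssignable (θ : V → L → ℝ) (Lab : V → Finset L) (v : V) (ℓ : L) : Prop :=
  ∃ x : V ≃ L, OptimalAssignment θ Lab x ∧ x v = ℓ

/-- Edges of the equality subgraph for a dual solution `(α, β)`. -/
def EqEdge (θ : V → L → ℝ) (Lab : V → Finset L) (α : V → ℝ) (β : L → ℝ)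
    (v : V) (ℓ : L) : Prop :=
  ℓ ∈ Lab v ∧ α v + β ℓ = θ v ℓ

/-- `x` is a perfect matching in the bipartite graph with edges `E`. -/
def IsPerfectMatching (E : V → L → Prop) (x : V ≃ L) : Prop := ∀ v, E v (x v)

/-- The edge `{v, ℓ}` is perfectly matchable: some perfect matching uses it. -/
def PerfectlyMatchable (E : V → L → Prop) (v : V) (ℓ : L) : Prop :=
  ∃ x : V ≃ L, IsPerfectMatching E x ∧ x v = ℓ

/-- The directed graph `F_x(E)` on `V` induced by a perfect matching `x` of `E`. -/
def Fdir (E : V → L → Prop) (x : V ≃ L) (u w : V) : Prop := u ≠ w ∧ E u (x w)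

end LAPDefs

/-- The directed edge `(a, b)` lies on a directed cycle of the directed graph `F`:
there is a duplicate-free list `a :: b :: l` forming a directed path along `F`
whose last vertex has an edge back to `a`. -/
def EdgeOnDirectedCycle {α : Type*} (F : α → α → Prop) (a b : α) : Prop :=
  ∃ l : List α, (a :: b :: l).Nodup ∧ List.Chain F a (b :: l) ∧
    F ((b :: l).getLast (List.cons_ne_nil _ _)) a

/-- `S` is a strongly connected component of the directed graph `F`: nonempty, any two of
its vertices are mutually reachable, and it is maximal with this property. -/
def IsSCC {α : Type*} (F : α → α → Prop) (S : Set α) : Prop :=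
  S.Nonempty ∧ (∀ u ∈ S, ∀ w ∈ S, Relation.ReflTransGen F u w) ∧
  ∀ T : Set α, S ⊆ T → (∀ u ∈ T, ∀ w ∈ T, Relation.ReflTransGen F u w) → T = S

/-! For an optimal assignment `x`, optimality rules out negative cycles in the exchange graph
(`v → u` when `x u ∈ Lab v`, with weight `θ v (x u) - θ v (x v)`), so shortest-path potentials
exist; they form a dual solution of value `assignCost θ x`. Hence the optimal dual solutions are
exactly the feasible ones that are tight on every minimally assignable pair.

If an allowed pair is not minimally assignable, lowering its cost by less than the optimality
gap keeps the optimal value, and an optimal dual solution of the perturbed problem is an optimal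
one of the original problem that is slack at that pair. A point of the relative interior can be
pushed a little beyond any point of the set, so it cannot be tight at such a pair. Conversely, a
point that is slack at all these pairs has a neighbourhood in the affine span that stays within
the optimal set. -/

open Filter Topology

section Potential

variable {α : Type*}

def pathWeight (w : α → α → ℝ) : List α → ℝ
  | a :: b :: l => w a b + pathWeight w (b :: l)
  | _ => 0

variable (w : α → α → ℝ)

theorem pathWeight_append_cons (s : List α) (a : α) (t : List α) :
    pathWeight w (s ++ a :: t) = pathWeight w (s ++ [a]) + pathWeight w (a :: t) := by
  induction s with
  | nil => simp [pathWeight]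
  | cons b s ih =>
    cases s with
    | nil => simp [pathWeight]
    | cons c s => simp only [List.cons_append, pathWeight] at ih ⊢; rw [ih]; ring

theorem pathWeight_cons_append_singleton (a c : α) (l : List α) :
    pathWeight w (a :: l ++ [c]) = (List.zipWith w (a :: l) (l ++ [c])).sum := by
  induction l generalizing a with
  | nil => simp [pathWeight]
  | cons b l ih => simp [pathWeight, ← ih]

theorem List.map_formPerm_cons [DecidableEq α] {a : α} {l : List α} (h : (a :: l).Nodup) :
    (a :: l).map (a :: l).formPerm = l ++ [a] := by
  refine List.ext_getElem (by simp) fun i h₁ h₂ => ?_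
  rw [List.getElem_map, List.formPerm_apply_getElem _ h]
  simpa using (List.getElem_rotate (a :: l) 1 i (by simpa using h₁)).symm

theorem sum_formPerm_cons [DecidableEq α] {a : α} {l : List α} (h : (a :: l).Nodup) :
    ∑ z ∈ (a :: l).toFinset, w z ((a :: l).formPerm z) = pathWeight w (a :: l ++ [a]) := by
  rw [List.sum_toFinset _ h, pathWeight_cons_append_singleton, ← List.map_formPerm_cons h,
    List.zipWith_map_right, List.zipWith_self]

theorem rel_formPerm_cons [DecidableEq α] {E : α → α → Prop} {a : α} {l : List α}
    (h : (a :: l).Nodup) (hE : List.IsChain E (a :: l ++ [a])) :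
    ∀ z ∈ a :: l, E z ((a :: l).formPerm z) := by
  rw [List.isChain_cons_append_singleton_iff_forall₂, ← List.map_formPerm_cons h,
    List.forall₂_map_right_iff] at hE
  exact List.forall₂_same.1 hE

theorem exists_potential_of_cycle_nonneg [Finite α] (E : α → α → Prop)
    (hcyc : ∀ a l, (a :: l).Nodup → List.IsChain E (a :: l ++ [a]) →
      0 ≤ pathWeight w (a :: l ++ [a])) :
    ∃ π : α → ℝ, ∀ a b, E a b → π a ≤ w a b + π b := by
  have := Fintype.ofFinite α
  set paths : α → Set (List α) := fun a => {r | (a :: r).Nodup ∧ List.IsChain E (a :: r)}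
  have hfin (a : α) : (paths a).Finite :=
    (Set.finite_range (Subtype.val : {l : List α // l.Nodup} → List α)).subset
      fun r hr => ⟨⟨r, hr.1.of_cons⟩, rfl⟩
  have hne (a : α) : (paths a).Nonempty := ⟨[], by simp [paths]⟩
  choose r hr hmin using fun a =>
    Set.exists_min_image (paths a) (fun r => pathWeight w (a :: r)) (hfin a) (hne a)
  refine ⟨fun a => pathWeight w (a :: r a), fun a b hab => ?_⟩
  obtain ⟨hnd, hch⟩ := hr b
  by_cases ha : a ∈ b :: r b
  · obtain ⟨s, t, hst⟩ := List.append_of_mem ha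
    rw [hst] at hnd hch
    have ht : t ∈ paths a :=
      ⟨hnd.sublist (List.suffix_append _ _).sublist, hch.suffix (List.suffix_append _ _)⟩
    have hs : (a :: s).Nodup :=
      (List.nodup_middle.1 hnd).sublist ((List.sublist_append_left s t).cons_cons a)
    rcases s with _ | ⟨c, s⟩
    · obtain ⟨rfl, hrt⟩ : b = a ∧ r b = t := by simpa using hst
      have hloop := hcyc b [] hs (by simpa using hab)
      simp only [List.cons_append, List.nil_append, pathWeight] at hloop
      simp only [hrt]
      linarith
    · obtain ⟨rfl, hrs⟩ : b = c ∧ r b = s ++ a :: t := by simpa using hst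
      have hloop := hcyc a (b :: s) hs
        (List.isChain_cons_cons.2 ⟨hab, (List.isChain_split.1 hch).1⟩)
      have hpath := hmin a t ht
      have hsplit := pathWeight_append_cons w (b :: s) a t
      simp only [List.cons_append, pathWeight] at hloop hsplit
      simp only [hrs, hsplit]
      linarith
  · have hpath := hmin a (b :: r b)
      ⟨List.nodup_cons.2 ⟨ha, hnd⟩, List.isChain_cons_cons.2 ⟨hab, hch⟩⟩
    simpa [pathWeight] using hpath

end Potential

theorem exists_pos_add_le_of_forall_lt {ι : Type*} [Finite ι] {P : ι → Prop} {a : ℝ}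
    {b : ι → ℝ} (h : ∀ i, P i → a < b i) : ∃ ε > 0, ∀ i, P i → a + ε ≤ b i := by
  have hnhds : ∀ᶠ ε in 𝓝 (0 : ℝ), ∀ i, P i → a + ε ≤ b i :=
    eventually_all.2 fun i => eventually_imp_distrib_left.2 fun hi =>
      (((continuous_const_add a).tendsto' 0 a (add_zero a)).eventually_lt_const (h i hi)).mono
        fun _ => le_of_lt
  obtain ⟨ε, hε, hε0⟩ := ((hnhds.filter_mono nhdsWithin_le_nhds).and
    (self_mem_nhdsWithin : Set.Ioi (0 : ℝ) ∈ 𝓝[>] 0)).exists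
  exact ⟨ε, hε0, hε⟩

section IntrinsicInterior

variable {E : Type*} [AddCommGroup E] [Module ℝ E] [TopologicalSpace E]
  [IsTopologicalAddGroup E] [ContinuousSMul ℝ E]

theorem exists_pos_add_smul_sub_mem_of_mem_intrinsicInterior {s : Set E} {x y : E}
    (hx : x ∈ intrinsicInterior ℝ s) (hy : y ∈ s) : ∃ t > (0 : ℝ), x + t • (x - y) ∈ s := by
  obtain ⟨x', hx', rfl⟩ := mem_intrinsicInterior.1 hx
  have hline (t : ℝ) : (x' : E) + t • ((x' : E) - y) ∈ affineSpan ℝ s := by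
    simpa [vsub_eq_sub, vadd_eq_add, add_comm] using
      AffineSubspace.smul_vsub_vadd_mem _ t x'.2 (subset_affineSpan ℝ s hy) x'.2
  let c : ℝ → affineSpan ℝ s := fun t => ⟨_, hline t⟩
  have hc : Continuous c := by fun_prop
  have h0 : ∀ᶠ t in 𝓝 (0 : ℝ), c t ∈ interior (Subtype.val ⁻¹' s) :=
    hc.continuousAt.preimage_mem_nhds (by simpa [c] using isOpen_interior.mem_nhds hx')
  obtain ⟨t, ht, ht0⟩ := ((h0.filter_mono nhdsWithin_le_nhds).and
    (self_mem_nhdsWithin : Set.Ioi (0 : ℝ) ∈ 𝓝[>] 0)).exists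
  exact ⟨t, ht0, interior_subset (s := Subtype.val ⁻¹' s) ht⟩

end IntrinsicInterior

theorem mem_intrinsicInterior_of_affineSpan_inter_subset {𝕜 V P : Type*} [Ring 𝕜]
    [AddCommGroup V] [Module 𝕜 V] [TopologicalSpace P] [AddTorsor V P] {s U : Set P} {x : P}
    (hx : x ∈ s) (hU : U ∈ 𝓝 x) (hsub : (affineSpan 𝕜 s : Set P) ∩ U ⊆ s) :
    x ∈ intrinsicInterior 𝕜 s := by
  refine mem_intrinsicInterior.2 ⟨⟨x, subset_affineSpan 𝕜 s hx⟩, ?_, rfl⟩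
  refine mem_interior_iff_mem_nhds.2 (mem_of_superset
    (continuous_subtype_val.continuousAt.preimage_mem_nhds hU) fun y hy => hsub ⟨y.2, hy⟩)

section Assignment

variable {V L : Type*} [Fintype V] (θ : V → L → ℝ) (Lab : V → Finset L)

theorem exists_optimalAssignment [Finite L] (h : ∃ x, FeasibleAssignment Lab x) :
    ∃ x, OptimalAssignment θ Lab x := by
  obtain ⟨x, hx, hmin⟩ :=
    Set.exists_min_image {x | FeasibleAssignment Lab x} (assignCost θ) (Set.toFinite _) h
  exact ⟨x, hx, hmin⟩

theorem MinimallyAssignable.mem {v : V} {ℓ : L} (h : MinimallyAssignable θ Lab v ℓ) :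
    ℓ ∈ Lab v := by
  obtain ⟨x, hx, rfl⟩ := h
  exact hx.1 v

theorem OptimalAssignment.pathWeight_cycle_nonneg {x : V ≃ L} (hx : OptimalAssignment θ Lab x)
    {a : V} {l : List V} (hl : (a :: l).Nodup)
    (hE : List.IsChain (fun v u => x u ∈ Lab v) (a :: l ++ [a])) :
    0 ≤ pathWeight (fun v u => θ v (x u) - θ v (x v)) (a :: l ++ [a]) := by
  classical
  have hfix (z : V) (hz : z ∉ a :: l) : (a :: l).formPerm z = z := List.formPerm_apply_of_notMem hz
  have hy : FeasibleAssignment Lab ((a :: l).formPerm.trans x) := fun z => by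
    by_cases hz : z ∈ a :: l
    · exact rel_formPerm_cons hl hE z hz
    · simpa only [Equiv.trans_apply, hfix z hz] using hx.1 z
  have hcost := hx.2 _ hy
  rw [← sum_formPerm_cons _ hl, Finset.sum_subset (Finset.subset_univ _)
    fun z _ hz => by rw [hfix z (by simpa using hz), sub_self], Finset.sum_sub_distrib]
  simp only [assignCost, Equiv.trans_apply] at hcost
  linarith

variable [Fintype L]

theorem dualObj_eq_sum (p : (V → ℝ) × (L → ℝ)) (x : V ≃ L) :
    dualObj p = ∑ v, (p.1 v + p.2 (x v)) := by
  rw [dualObj, ← Equiv.sum_comp x p.2, ← Finset.sum_add_distrib]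

theorem dualObj_le_assignCost {p : (V → ℝ) × (L → ℝ)} (hp : DualFeasible θ Lab p) {x : V ≃ L}
    (hx : FeasibleAssignment Lab x) : dualObj p ≤ assignCost θ x := by
  rw [dualObj_eq_sum p x]
  exact Finset.sum_le_sum fun v _ => hp v (x v) (hx v)

theorem dualObj_eq_assignCost_iff {p : (V → ℝ) × (L → ℝ)} (hp : DualFeasible θ Lab p)
    {x : V ≃ L} (hx : FeasibleAssignment Lab x) :
    dualObj p = assignCost θ x ↔ ∀ v, p.1 v + p.2 (x v) = θ v (x v) := by
  rw [dualObj_eq_sum p x, assignCost, Finset.sum_eq_sum_iff_of_le fun v _ => hp v (x v) (hx v)]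
  simp

theorem OptimalAssignment.exists_dualFeasible_dualObj_eq {x : V ≃ L}
    (hx : OptimalAssignment θ Lab x) :
    ∃ p, DualFeasible θ Lab p ∧ dualObj p = assignCost θ x := by
  obtain ⟨π, hπ⟩ := exists_potential_of_cycle_nonneg _ _
    fun a l => hx.pathWeight_cycle_nonneg θ Lab (a := a) (l := l)
  refine ⟨(fun v => θ v (x v) + π v, fun ℓ => -π (x.symm ℓ)), fun v ℓ hℓ => ?_, ?_⟩
  · have := hπ v (x.symm ℓ) (by simpa using hℓ)
    simp only [Equiv.apply_symm_apply] at this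
    simp only
    linarith
  · rw [dualObj_eq_sum _ x, assignCost]
    simp

theorem OptimalAssignment.mem_dualOpt_iff {x : V ≃ L} (hx : OptimalAssignment θ Lab x)
    {p : (V → ℝ) × (L → ℝ)} :
    p ∈ DualOpt θ Lab ↔ DualFeasible θ Lab p ∧ dualObj p = assignCost θ x := by
  refine ⟨fun hp => ⟨hp.1, (dualObj_le_assignCost θ Lab hp.1 hx.1).antisymm ?_⟩,
    fun ⟨hp, hpx⟩ => ⟨hp, fun q hq => hpx ▸ dualObj_le_assignCost θ Lab hq hx.1⟩⟩
  obtain ⟨q, hq, hqx⟩ := hx.exists_dualFeasible_dualObj_eq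
  exact hqx ▸ hp.2 q hq

theorem mem_dualOpt_iff_tight (hopt : ∃ x, OptimalAssignment θ Lab x)
    {p : (V → ℝ) × (L → ℝ)} :
    p ∈ DualOpt θ Lab ↔
      DualFeasible θ Lab p ∧ ∀ v ℓ, MinimallyAssignable θ Lab v ℓ → p.1 v + p.2 ℓ = θ v ℓ := by
  obtain ⟨x, hx⟩ := hopt
  rw [hx.mem_dualOpt_iff]
  refine ⟨fun ⟨hp, hpx⟩ => ⟨hp, ?_⟩, fun ⟨hp, htight⟩ =>
    ⟨hp, (dualObj_eq_assignCost_iff θ Lab hp hx.1).2 fun v => htight v (x v) ⟨x, hx, rfl⟩⟩⟩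
  rintro v - ⟨y, hy, rfl⟩
  have hxy : assignCost θ x = assignCost θ y := (hx.2 y hy.1).antisymm (hy.2 x hx.1)
  exact (dualObj_eq_assignCost_iff θ Lab hp hy.1).1 (hpx.trans hxy) v

theorem OptimalAssignment.exists_mem_dualOpt_lt {x : V ≃ L} (hx : OptimalAssignment θ Lab x)
    {v : V} {ℓ : L} (hℓ : ℓ ∈ Lab v) (hMA : ¬MinimallyAssignable θ Lab v ℓ) :
    ∃ q ∈ DualOpt θ Lab, q.1 v + q.2 ℓ < θ v ℓ := by
  classical
  obtain ⟨ε, hε, hgap⟩ := exists_pos_add_le_of_forall_lt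
    (P := fun y : V ≃ L => FeasibleAssignment Lab y ∧ y v = ℓ) (b := assignCost θ)
    fun y ⟨hy, hyv⟩ => lt_of_not_ge fun hle =>
      hMA ⟨y, ⟨hy, fun z hz => hle.trans (hx.2 z hz)⟩, hyv⟩
  set θ' : V → L → ℝ := fun w m => θ w m - if w = v ∧ m = ℓ then ε else 0
  have hcost (y : V ≃ L) : assignCost θ' y = assignCost θ y - if y v = ℓ then ε else 0 := by
    rw [assignCost, assignCost, Finset.sum_sub_distrib,
      Fintype.sum_eq_single v fun w hw => if_neg fun h => hw h.1]
    simp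
  have hxv : x v ≠ ℓ := fun h => hMA ⟨x, hx, h⟩
  have hx' : OptimalAssignment θ' Lab x := ⟨hx.1, fun y hy => by
    rw [hcost, hcost, if_neg hxv]
    split_ifs with hyv
    · linarith [hgap y ⟨hy, hyv⟩]
    · linarith [hx.2 y hy]⟩
  obtain ⟨q, hq, hqx⟩ := hx'.exists_dualFeasible_dualObj_eq
  have hqθ : DualFeasible θ Lab q := fun w m hm => (hq w m hm).trans (by
    simp only [θ']
    split_ifs <;> linarith)
  refine ⟨q, (hx.mem_dualOpt_iff θ Lab).2 ⟨hqθ, by rw [hqx, hcost, if_neg hxv, sub_zero]⟩, ?_⟩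
  have := hq v ℓ hℓ
  simp only [θ', and_self, if_true] at this
  linarith

theorem MinimallyAssignable.of_mem_intrinsicInterior {x : V ≃ L} (hx : OptimalAssignment θ Lab x)
    {p : (V → ℝ) × (L → ℝ)} (hp : p ∈ intrinsicInterior ℝ (DualOpt θ Lab)) {v : V} {ℓ : L}
    (hℓ : ℓ ∈ Lab v) (htight : p.1 v + p.2 ℓ = θ v ℓ) : MinimallyAssignable θ Lab v ℓ := by
  by_contra hMA
  obtain ⟨q, hq, hlt⟩ := hx.exists_mem_dualOpt_lt θ Lab hℓ hMA
  obtain ⟨t, ht, hpq⟩ := exists_pos_add_smul_sub_mem_of_mem_intrinsicInterior hp hq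
  have hfeas := hpq.1 v ℓ hℓ
  simp only [Prod.fst_add, Prod.snd_add, Prod.smul_fst, Prod.smul_snd, Prod.fst_sub,
    Prod.snd_sub, Pi.add_apply, Pi.smul_apply, Pi.sub_apply, smul_eq_mul] at hfeas
  nlinarith

theorem add_eq_of_mem_affineSpan_dualOpt (hopt : ∃ x, OptimalAssignment θ Lab x)
    {r : (V → ℝ) × (L → ℝ)} (hr : r ∈ affineSpan ℝ (DualOpt θ Lab)) {v : V} {ℓ : L}
    (hMA : MinimallyAssignable θ Lab v ℓ) : r.1 v + r.2 ℓ = θ v ℓ := by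
  let f : (V → ℝ) × (L → ℝ) →ᵃ[ℝ] ℝ :=
    (LinearMap.proj (R := ℝ) v ∘ₗ LinearMap.fst ℝ (V → ℝ) (L → ℝ) +
      LinearMap.proj (R := ℝ) ℓ ∘ₗ LinearMap.snd ℝ (V → ℝ) (L → ℝ)).toAffineMap
  simpa [f] using AffineMap.eqOn_affineSpan (f := f) (g := AffineMap.const ℝ _ (θ v ℓ))
    (fun p hp => by simpa [f] using ((mem_dualOpt_iff_tight θ Lab hopt).1 hp).2 v ℓ hMA) hr

theorem mem_intrinsicInterior_dualOpt (hopt : ∃ x, OptimalAssignment θ Lab x)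
    {p : (V → ℝ) × (L → ℝ)} (hp : DualFeasible θ Lab p)
    (htight : ∀ v ℓ, MinimallyAssignable θ Lab v ℓ → p.1 v + p.2 ℓ = θ v ℓ)
    (hslack : ∀ v ℓ, ℓ ∈ Lab v → ¬MinimallyAssignable θ Lab v ℓ → p.1 v + p.2 ℓ < θ v ℓ) :
    p ∈ intrinsicInterior ℝ (DualOpt θ Lab) := by
  refine mem_intrinsicInterior_of_affineSpan_inter_subset
    ((mem_dualOpt_iff_tight θ Lab hopt).2 ⟨hp, htight⟩)
    (U := {r | ∀ v ℓ, ℓ ∈ Lab v → ¬MinimallyAssignable θ Lab v ℓ → r.1 v + r.2 ℓ < θ v ℓ})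
    ?_ fun r ⟨hrA, hrU⟩ => ?_
  · refine eventually_all.2 fun v => eventually_all.2 fun ℓ => eventually_imp_distrib_left.2
      fun hℓ => eventually_imp_distrib_left.2 fun hMA => ?_
    exact (Continuous.tendsto (by fun_prop) p).eventually_lt_const (hslack v ℓ hℓ hMA)
  · have hrtight := fun v ℓ => add_eq_of_mem_affineSpan_dualOpt θ Lab hopt hrA (v := v) (ℓ := ℓ)
    refine (mem_dualOpt_iff_tight θ Lab hopt).2 ⟨fun v ℓ hℓ => ?_, hrtight⟩
    by_cases hMA : MinimallyAssignable θ Lab v ℓ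
    · exact (hrtight v ℓ hMA).le
    · exact (hrU v ℓ hℓ hMA).le

end Assignment

theorem statement2_general {V L : Type*} [Fintype V] [Fintype L]
    (θ : V → L → ℝ) (Lab : V → Finset L)
    (hfeas : ∃ x : V ≃ L, FeasibleAssignment Lab x)
    (α : V → ℝ) (β : L → ℝ) (hαβ : DualFeasible θ Lab (α, β)) :
    (α, β) ∈ intrinsicInterior ℝ (DualOpt θ Lab) ↔
      ∀ v ℓ, ℓ ∈ Lab v → (α v + β ℓ = θ v ℓ ↔ MinimallyAssignable θ Lab v ℓ) := by
  obtain ⟨x, hx⟩ := exists_optimalAssignment θ Lab hfeas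
  constructor
  · intro hint v ℓ hℓ
    exact ⟨MinimallyAssignable.of_mem_intrinsicInterior θ Lab hx hint hℓ,
      ((mem_dualOpt_iff_tight θ Lab ⟨x, hx⟩).1 (intrinsicInterior_subset hint)).2 v ℓ⟩
  · intro h
    apply mem_intrinsicInterior_dualOpt θ Lab ⟨x, hx⟩ hαβ
    · exact fun v ℓ hMA => (h v ℓ (hMA.mem θ Lab)).2 hMA
    · exact fun v ℓ hℓ hMA => (hαβ v ℓ hℓ).lt_of_ne fun heq => hMA ((h v ℓ hℓ).1 heq)

/-- Corollary 1: a dual-feasible `(α, β)` lies in the relative interior of the dual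
optimal set iff equality `α v + β ℓ = θ v ℓ` holds exactly on minimally-assignable pairs. -/
theorem statement2 {V L : Type*} [Fintype V] [Fintype L] [DecidableEq V] [DecidableEq L]
    (θ : V → L → ℝ) (Lab : V → Finset L)
    (hfeas : ∃ x : V ≃ L, FeasibleAssignment Lab x)
    (α : V → ℝ) (β : L → ℝ) (hαβ : DualFeasible θ Lab (α, β)) :
    (α, β) ∈ intrinsicInterior ℝ (DualOpt θ Lab) ↔
      ∀ v ℓ, ℓ ∈ Lab v → (α v + β ℓ = θ v ℓ ↔ MinimallyAssignable θ Lab v ℓ) :=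
  statement2_general θ Lab hfeas α β hαβ
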